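/- Let G be a group, H and K subgroups with (H, K) a strict factorization system. If α ∈ (β⁻¹ H β) ∩ (γ K γ⁻¹) for some β, γ ∈ G, that is, there exist β, γ ∈ G, h ∈ H and k ∈ K with α = β⁻¹ * h * β and α = γ * k * γ⁻¹, then α = 1. -/
import Mathlib


/-- If (H, K) is a strict factorization system and α lies in some conjugate of H and
in some conjugate of K, then α = 1. -/
theorem stmt3 {G : Type*} [Group G] (H K : Subgroup G)
    (hsfs : ∀ g : G, ∃! p : H × K, (p.1 : G) * (p.2 : G) = g)
    (α β γ : G)
    (hH : ∃ h ∈ H, α = β⁻¹ * h * β)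
    (hK : ∃ k ∈ K, α = γ * k * γ⁻¹) :
    α = 1 := by
  obtain ⟨h, hh, rfl⟩ := hH
  obtain ⟨k, hk, hα2⟩ := hK
  obtain ⟨⟨h0, k0⟩, hp, -⟩ := hsfs (β * γ)
  simp only at hp
  obtain ⟨p, -, huniq⟩ := hsfs ((h0 : G) * k0 * k)
  have key : h * (β * γ) = (β * γ) * k := by
    have : β * (β⁻¹ * h * β) * γ = β * (γ * k * γ⁻¹) * γ := by rw [← hα2]
    group at this ⊢
    simpa using this
  have q1 := huniq (⟨h, hh⟩ * h0, k0) (by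
    simp only
    push_cast
    rw [mul_assoc, hp, key, ← hp])
  have q2 := huniq (h0, k0 * ⟨k, hk⟩) (by
    simp only
    push_cast
    group)
  have := q1.trans q2.symm
  have h1 : (⟨h, hh⟩ * h0 : H) = h0 := congrArg Prod.fst this
  have hh1 : h = 1 := by simpa using h1
  rw [hh1]; group
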